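/- arXiv:1910.14555 — 4 statements merged into one kernel-verified Lean document; each statement's English description precedes it below -/
import Mathlib

section
/- Let (Ω,Σ,μ) be a finite measure space, Z a real Banach space, and ν : Σ → Z* a countably additive μ-continuous vector measure. For each z ∈ Z let f_z ∈ L¹(μ) denote the Radon–Nikodým derivative with respect to μ of the scalar measure A ↦ ⟨ν(A), z⟩. If C ⊆ Z is norm-bounded, then the set {f_z : z ∈ C} is uniformly integrable in L¹(μ). -/
open MeasureTheory Filter Set Topology
open scoped UniformConvergence

noncomputable section

/-- The topology `σ(Z,X)` on `Z` of pointwise convergence on a subspace `X ⊆ Z*`. -/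
def sigmaTop {Z : Type*} [NormedAddCommGroup Z] [NormedSpace ℝ Z]
    (X : Submodule ℝ (Z →L[ℝ] ℝ)) : TopologicalSpace Z :=
  TopologicalSpace.induced (fun z => fun x : X => (x : Z →L[ℝ] ℝ) z) Pi.topologicalSpace

/-- The weak* topology on the dual of `E`: pointwise convergence on `E`. -/
def wstarTop (E : Type*) [NormedAddCommGroup E] [NormedSpace ℝ E] :
    TopologicalSpace (E →L[ℝ] ℝ) :=
  TopologicalSpace.induced (fun f => (f : E → ℝ)) Pi.topologicalSpace

/-- A norm-closed subspace `X ⊆ Z*` is norming for `Z` if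
`|||z||| = sup {⟨x,z⟩ : x ∈ B_X}` is an equivalent norm on `Z`; since this sup is always
`≤ ‖z‖`, this amounts to the existence of `c > 0` with `c⬝‖z‖ ≤ |||z|||` for all `z`. -/
def IsNorming {Z : Type*} [NormedAddCommGroup Z] [NormedSpace ℝ Z]
    (X : Submodule ℝ (Z →L[ℝ] ℝ)) : Prop :=
  ∃ c > (0 : ℝ), ∀ z : Z, c * ‖z‖ ≤ sSup {r : ℝ | ∃ x ∈ X, ‖x‖ ≤ 1 ∧ r = x z}

/-- The average range `𝒜_ν(A) = {ν(B)/μ(B) : B ∈ Σ, B ⊆ A, μ(B) > 0}`. -/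
def avgRange {Ω : Type*} [MeasurableSpace Ω] {Z : Type*} [NormedAddCommGroup Z]
    [NormedSpace ℝ Z] (μ : Measure Ω) (ν : VectorMeasure Ω (Z →L[ℝ] ℝ)) (A : Set Ω) :
    Set (Z →L[ℝ] ℝ) :=
  {w | ∃ B : Set Ω, MeasurableSet B ∧ B ⊆ A ∧ 0 < μ B ∧ w = (μ B).toReal⁻¹ • ν B}

/-- Condition (G): for every `A ∈ Σ` with `μ(A) > 0`, the `w*`-closed convex hull of the
average range `𝒜_ν(A)` intersects `X`. -/
def CondG {Ω : Type*} [MeasurableSpace Ω] {Z : Type*} [NormedAddCommGroup Z]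
    [NormedSpace ℝ Z] (μ : Measure Ω) (ν : VectorMeasure Ω (Z →L[ℝ] ℝ))
    (X : Submodule ℝ (Z →L[ℝ] ℝ)) : Prop :=
  ∀ A : Set Ω, MeasurableSet A → 0 < μ A →
    (@closure _ (wstarTop Z) (convexHull ℝ (avgRange μ ν A)) ∩
      (X : Set (Z →L[ℝ] ℝ))).Nonempty

/-- `h` is a convex block subsequence of `g`: `h k = ∑_{n ∈ I k} a n • g n` where the finite
sets `I k` satisfy `max (I k) < min (I (k+1))` and the `a n` are non-negative reals summing
to `1` over each `I k`. -/
def ConvexBlock {E : Type*} [AddCommMonoid E] [Module ℝ E] (g h : ℕ → E) : Prop :=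
  ∃ (I : ℕ → Finset ℕ) (a : ℕ → ℝ),
    (∀ k, ∀ n ∈ I k, ∀ m ∈ I (k + 1), n < m) ∧
    (∀ n, 0 ≤ a n) ∧ (∀ k, ∑ n ∈ I k, a n = 1) ∧
    (∀ k, h k = ∑ n ∈ I k, a n • g n)

/-- `(B_{X*}, w*)` is convex block compact: every sequence in the closed unit ball of `X*`
admits a convex block subsequence which is `w*`-convergent. -/
def DualBallConvexBlockCompact (X : Type*) [NormedAddCommGroup X] [NormedSpace ℝ X] : Prop :=
  ∀ g : ℕ → (X →L[ℝ] ℝ), (∀ n, ‖g n‖ ≤ 1) →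
    ∃ h : ℕ → (X →L[ℝ] ℝ), ConvexBlock g h ∧
      ∃ f : X →L[ℝ] ℝ, Tendsto h atTop (@nhds _ (wstarTop X) f)
/-! Splitting `A` along the sign of `f_z` gives
`∫_A |f_z| dμ = ⟨ν (A ∩ P) - ν (A \ P), z⟩ ≤ 2 ‖z‖ sup_{B ⊆ A} ‖ν B‖`, so it suffices that the
range of `ν` is bounded and that `‖ν A‖ → 0` as `μ A → 0`. For the latter, sets `A n` with
`μ (A n) ≤ 2⁻ⁿ` have a null limsup (Borel–Cantelli). If `‖ν (A n)‖ ≥ ε` infinitely often, removing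
from such an `A n` a tail union `⋃ i ≥ k, A i` changes `ν (A n)` by less than `ε / 2` once `k` is
large (continuity from above, the limit being null), and this yields pairwise disjoint sets on which
`‖ν‖ ≥ ε / 2`, contradicting countable additivity. -/

theorem Set.pairwise_disjoint_sdiff_iUnion_ge {α : Type*} (A : ℕ → Set α) {n : ℕ → ℕ}
    (hn : StrictMono n) :
    Pairwise (Function.onFun Disjoint fun j ↦ A (n j) \ ⋃ i ≥ n (j + 1), A i) := by
  refine (pairwise_disjoint_on _).2 fun j l hjl ↦ ?_
  refine disjoint_sdiff_left.mono_right ?_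
  exact sdiff_subset.trans <| subset_biUnion_of_mem (u := A) (hn.monotone hjl)

namespace MeasureTheory.VectorMeasure

variable {α E : Type*} [MeasurableSpace α] [NormedAddCommGroup E] {μ : Measure α}
  (v : VectorMeasure α E)

theorem tendsto_apply_inter_iUnion_ge (hv : ∀ s, μ s = 0 → v s = 0) {A : ℕ → Set α}
    (hA : ∀ n, MeasurableSet (A n)) (hlim : μ (limsup A atTop) = 0) (m : ℕ) :
    Tendsto (fun k ↦ v (A m ∩ ⋃ i ≥ k, A i)) atTop (𝓝 0) := by
  have hanti : Antitone fun k ↦ A m ∩ ⋃ i ≥ k, A i := fun k l hkl ↦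
    inter_subset_inter_right _ (biUnion_subset_biUnion_left fun i hi ↦ le_trans hkl hi)
  have hnull : v (⋂ k, A m ∩ ⋃ i ≥ k, A i) = 0 := by
    refine hv _ (measure_mono_null (iInter_mono fun k ↦ inter_subset_right) ?_)
    rwa [limsup_eq_iInf_iSup_of_nat] at hlim
  rw [← hnull]
  exact tendsto_vectorMeasure_iInter_atTop_nat hanti fun k ↦
    (hA m).inter (.biUnion (to_countable _) fun i _ ↦ hA i)

theorem tendsto_apply_of_measure_limsup_eq_zero (hv : ∀ s, μ s = 0 → v s = 0) {A : ℕ → Set α}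
    (hA : ∀ n, MeasurableSet (A n)) (hlim : μ (limsup A atTop) = 0) :
    Tendsto (fun n ↦ v (A n)) atTop (𝓝 0) := by
  set T : ℕ → Set α := fun k ↦ ⋃ i ≥ k, A i
  have hT : ∀ k, MeasurableSet (T k) := fun k ↦ .biUnion (to_countable _) fun i _ ↦ hA i
  by_contra hconv
  obtain ⟨ε, hε, hbad⟩ : ∃ ε > 0, ∃ᶠ n in atTop, ε ≤ ‖v (A n)‖ := by
    simpa [Metric.tendsto_atTop, frequently_atTop] using hconv
  have hε₂ : ‖(0 : E)‖ < ε / 2 := by simpa using hε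
  have hnext : ∀ m, ∃ k, (m < k ∧ ‖v (A m ∩ T k)‖ < ε / 2) ∧ ε ≤ ‖v (A k)‖ := fun m ↦
    (((eventually_gt_atTop m).and ((tendsto_apply_inter_iUnion_ge v hv hA hlim m).norm.eventually
      (gt_mem_nhds hε₂))).and_frequently hbad).exists
  choose φ hφ hφbad using hnext
  set n : ℕ → ℕ := fun j ↦ φ^[j + 1] 0
  have hn_succ : ∀ j, n (j + 1) = φ (n j) := fun j ↦ Function.iterate_succ_apply' φ (j + 1) 0
  have hn : StrictMono n := strictMono_nat_of_lt_succ fun j ↦ hn_succ j ▸ (hφ (n j)).1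
  set C : ℕ → Set α := fun j ↦ A (n j) \ T (n (j + 1))
  have hbad_n : ∀ j, ε ≤ ‖v (A (n j))‖ := fun j ↦ by
    simpa only [n, Function.iterate_succ_apply'] using hφbad (φ^[j] 0)
  have hC : ∀ j, ε / 2 ≤ ‖v (C j)‖ := by
    intro j
    have hsplit : v (A (n j)) = v (A (n j) ∩ T (n (j + 1))) + v (C j) := by
      conv_lhs => rw [← inter_union_sdiff (A (n j)) (T (n (j + 1)))]
      exact of_union disjoint_sdiff_inter.symm ((hA _).inter (hT _)) ((hA _).diff (hT _))
    have hsmall : ‖v (A (n j) ∩ T (n (j + 1)))‖ < ε / 2 := hn_succ j ▸ (hφ (n j)).2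
    have hbig := hsplit ▸ hbad_n j
    linarith [norm_add_le (v (A (n j) ∩ T (n (j + 1)))) (v (C j))]
  have hCzero : Tendsto (fun j ↦ v (C j)) atTop (𝓝 0) :=
    (v.m_iUnion (fun j ↦ (hA _).diff (hT _))
      (Set.pairwise_disjoint_sdiff_iUnion_ge A hn)).summable.tendsto_atTop_zero
  obtain ⟨j, hj⟩ := (hCzero.norm.eventually (gt_mem_nhds hε₂)).exists
  exact (hC j).not_gt (by simpa using hj)

theorem exists_pos_forall_norm_le (hv : ∀ s, μ s = 0 → v s = 0) {ε : ℝ} (hε : 0 < ε) :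
    ∃ δ > 0, ∀ s, MeasurableSet s → μ s ≤ ENNReal.ofReal δ → ‖v s‖ ≤ ε := by
  by_contra! h
  choose A hA hAμ hAv using fun n : ℕ ↦ h (2⁻¹ ^ n) (by positivity)
  have hsum : ∑' n, μ (A n) ≠ ⊤ := by
    refine ne_top_of_le_ne_top (ENNReal.tsum_geometric_two ▸ ENNReal.ofNat_ne_top)
      (ENNReal.tsum_le_tsum fun n ↦ ?_)
    rw [← ENNReal.ofReal_ofNat 2, ← ENNReal.ofReal_inv_of_pos two_pos,
      ← ENNReal.ofReal_pow (by simp)]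
    exact hAμ n
  obtain ⟨n, hn⟩ := ((v.tendsto_apply_of_measure_limsup_eq_zero hv hA
    (measure_limsup_atTop_eq_zero hsum)).norm.eventually (gt_mem_nhds (by simpa using hε))).exists
  exact (hAv n).not_gt (by simpa using hn)

end MeasureTheory.VectorMeasure

theorem MeasureTheory.setIntegral_abs_le_of_forall_subset {α : Type*} [MeasurableSpace α]
    {μ : Measure α} {f : α → ℝ} (hf : Integrable f μ) {s : Set α} (hs : MeasurableSet s) {r : ℝ}
    (h : ∀ t ⊆ s, MeasurableSet t → |∫ x in t, f x ∂μ| ≤ r) :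
    ∫ x in s, |f x| ∂μ ≤ 2 * r := by
  obtain ⟨g, hgm, hfg⟩ := hf.aestronglyMeasurable
  have hg : Integrable g μ := hf.congr hfg
  set P := {x | 0 ≤ g x}
  have hP : MeasurableSet P := stronglyMeasurable_const.measurableSet_le hgm
  have hfg_on : ∀ t, ∫ x in t, f x ∂μ = ∫ x in t, g x ∂μ := fun t ↦
    integral_congr_ae (ae_restrict_of_ae hfg)
  calc ∫ x in s, |f x| ∂μ = ∫ x in s, |g x| ∂μ :=
        integral_congr_ae (ae_restrict_of_ae (hfg.mono fun x hx ↦ congrArg abs hx))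
    _ = ∫ x in s ∩ P, g x ∂μ - ∫ x in s \ P, g x ∂μ := by
        rw [← integral_inter_add_sdiff hP hg.abs.integrableOn, sub_eq_add_neg, ← integral_neg,
          setIntegral_congr_fun (hs.inter hP) fun x hx ↦ abs_of_nonneg hx.2,
          setIntegral_congr_fun (hs.diff hP) fun x hx ↦ abs_of_neg (not_le.1 hx.2)]
    _ ≤ |∫ x in s ∩ P, f x ∂μ| + |∫ x in s \ P, f x ∂μ| := by
        rw [hfg_on, hfg_on]; exact (le_abs_self _).trans (abs_sub _ _)
    _ ≤ 2 * r := by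
        linarith [h _ inter_subset_left (hs.inter hP), h _ sdiff_subset (hs.diff hP)]

theorem unifIntegrable_of_normBounded_general
    {Ω : Type*} [MeasurableSpace Ω] (μ : Measure Ω)
    {Z : Type*} [NormedAddCommGroup Z] [NormedSpace ℝ Z]
    (ν : VectorMeasure Ω (Z →L[ℝ] ℝ))
    (hν : ∀ A : Set Ω, μ A = 0 → ν A = 0)
    (f : Z → Ω → ℝ)
    (hfint : ∀ z : Z, Integrable (f z) μ)
    (hfRN : ∀ z : Z, ∀ A : Set Ω, MeasurableSet A → ∫ ω in A, f z ω ∂μ = ν A z)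
    (C : Set Z) (hC : ∃ M : ℝ, ∀ z ∈ C, ‖z‖ ≤ M) :
    (∃ M : ℝ, ∀ z ∈ C, ∫ ω, |f z ω| ∂μ ≤ M) ∧
    ∀ ε > (0 : ℝ), ∃ δ > (0 : ℝ), ∀ A : Set Ω, MeasurableSet A →
      μ A ≤ ENNReal.ofReal δ → ∀ z ∈ C, ∫ ω in A, |f z ω| ∂μ ≤ ε := by
  obtain ⟨M, hM⟩ := hC
  have hdensity : ∀ z A, MeasurableSet A → ∀ r, (∀ B ⊆ A, MeasurableSet B → ‖ν B‖ ≤ r) →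
      ∫ ω in A, |f z ω| ∂μ ≤ 2 * (r * ‖z‖) := fun z A hA r hr ↦
    setIntegral_abs_le_of_forall_subset (hfint z) hA fun B hBA hB ↦
      hfRN z B hB ▸ (ν B).le_of_opNorm_le (hr B hBA hB) z
  refine ⟨⟨2 * (ν.bound * M), fun z hz ↦ ?_⟩, fun ε hε ↦ ?_⟩
  · have := hdensity z univ .univ ν.bound fun B _ _ ↦ VectorMeasure.norm_apply_le_bound
    rw [Measure.restrict_univ] at this
    exact this.trans (by gcongr; exact hM z hz)
  · obtain ⟨δ, hδ, hνδ⟩ := ν.exists_pos_forall_norm_le hν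
      (div_pos hε (by positivity : (0 : ℝ) < 2 * (|M| + 1)))
    refine ⟨δ, hδ, fun A hA hAμ z hz ↦ (hdensity z A hA _ fun B hBA hB ↦
      hνδ B hB ((measure_mono hBA).trans hAμ)).trans ?_⟩
    calc 2 * (ε / (2 * (|M| + 1)) * ‖z‖) ≤ 2 * (ε / (2 * (|M| + 1)) * (|M| + 1)) := by
          gcongr; linarith [hM z hz, le_abs_self M]
      _ = ε := by field_simp

/-- If `ν ∈ ca(μ, Z*)` and `C ⊆ Z` is norm-bounded, then the family of Radon–Nikodým
derivatives `{f_z = d⟨ν,z⟩/dμ : z ∈ C}` is uniformly integrable in `L¹(μ)`. -/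
theorem unifIntegrable_of_normBounded
    {Ω : Type*} [MeasurableSpace Ω] (μ : Measure Ω) [IsFiniteMeasure μ]
    {Z : Type*} [NormedAddCommGroup Z] [NormedSpace ℝ Z] [CompleteSpace Z]
    (ν : VectorMeasure Ω (Z →L[ℝ] ℝ))
    (hν : ∀ A : Set Ω, μ A = 0 → ν A = 0)
    (f : Z → Ω → ℝ)
    (hfint : ∀ z : Z, Integrable (f z) μ)
    (hfRN : ∀ z : Z, ∀ A : Set Ω, MeasurableSet A → ∫ ω in A, f z ω ∂μ = ν A z)
    (C : Set Z) (hC : ∃ M : ℝ, ∀ z ∈ C, ‖z‖ ≤ M) :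
    (∃ M : ℝ, ∀ z ∈ C, ∫ ω, |f z ω| ∂μ ≤ M) ∧
    ∀ ε > (0 : ℝ), ∃ δ > (0 : ℝ), ∀ A : Set Ω, MeasurableSet A →
      μ A ≤ ENNReal.ofReal δ → ∀ z ∈ C, ∫ ω in A, |f z ω| ∂μ ≤ ε :=
  unifIntegrable_of_normBounded_general μ ν hν f hfint hfRN C hC
end
end

section
/- Let Z be a real Banach space and X ⊆ Z* a norm-closed subspace which is norming for Z. If a subset S ⊆ Z is relatively convex block compact in (Z,σ(Z,X)), then S is norm-bounded. -/
open MeasureTheory Filter Set Topology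
open scoped UniformConvergence

noncomputable section

/-! If some `x ∈ X` were unbounded above on `S`, pick `s n ∈ S` with `x (s n) ≥ n`. The `k`-th
block of a convex block subsequence `w` of `s` only uses indices `≥ k`, so `x (w k) ≥ k` and `w`
cannot converge in `σ(Z,X)`, where `x` is continuous. Hence the evaluations `x ↦ x z`, `z ∈ S`,
are pointwise bounded on the Banach space `X`; by the uniform boundedness principle they are
bounded in `X*`, and since `X` is norming this bounds `‖z‖`. -/

def RelativelyConvexBlockCompact {E : Type*} [AddCommGroup E] [Module ℝ E]
    (t : TopologicalSpace E) (S : Set E) : Prop :=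
  ∀ z : ℕ → E, (∀ n, z n ∈ S) →
    ∃ w : ℕ → E, ConvexBlock z w ∧ ∃ w₀ : E, Tendsto w atTop (@nhds _ t w₀)

namespace ConvexBlock

variable {E F : Type*} [AddCommGroup E] [Module ℝ E] [AddCommGroup F] [Module ℝ F]

theorem map {g h : ℕ → E} (hgh : ConvexBlock g h) (φ : E →ₗ[ℝ] F) :
    ConvexBlock (φ ∘ g) (φ ∘ h) := by
  obtain ⟨I, a, hI, ha, hsum, hh⟩ := hgh
  exact ⟨I, a, hI, ha, hsum, fun k => by simp [hh k, map_sum]⟩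

theorem le_of_mem_block {I : ℕ → Finset ℕ} (hI : ∀ k, ∀ n ∈ I k, ∀ m ∈ I (k + 1), n < m)
    (hne : ∀ k, (I k).Nonempty) : ∀ k, ∀ n ∈ I k, k ≤ n := by
  intro k
  induction k with
  | zero => exact fun n _ => n.zero_le
  | succ k ih =>
    intro n hn
    obtain ⟨m, hm⟩ := hne k
    exact (ih m hm).trans_lt (hI k m hm n hn)

theorem le_of_monotone {g h b : ℕ → ℝ} (hgh : ConvexBlock g h) (hb : Monotone b)
    (hbg : ∀ n, b n ≤ g n) (k : ℕ) : b k ≤ h k := by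
  obtain ⟨I, a, hI, ha, hsum, hh⟩ := hgh
  have hne : ∀ k, (I k).Nonempty := fun k =>
    Finset.nonempty_iff_ne_empty.2 fun h => by simpa [h] using hsum k
  calc b k = ∑ n ∈ I k, a n • b k := by rw [← Finset.sum_smul, hsum k, one_smul]
    _ ≤ ∑ n ∈ I k, a n • g n := Finset.sum_le_sum fun n hn =>
        smul_le_smul_of_nonneg_left
          ((hb (le_of_mem_block hI hne k n hn)).trans (hbg n)) (ha n)
    _ = h k := (hh k).symm

end ConvexBlock

namespace RelativelyConvexBlockCompact

variable {E : Type*} [AddCommGroup E] [Module ℝ E] {t : TopologicalSpace E} {S : Set E}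

theorem bddAbove_image (hS : RelativelyConvexBlockCompact t S) (φ : E →ₗ[ℝ] ℝ)
    (hφ : Continuous[t, _] φ) : BddAbove (φ '' S) := by
  by_contra hunb
  have hlarge : ∀ n : ℕ, ∃ s ∈ S, (n : ℝ) ≤ φ s := fun n => by
    by_contra! h
    exact hunb ⟨n, by rintro _ ⟨s, hs, rfl⟩; exact (h s hs).le⟩
  choose z hzS hz using hlarge
  obtain ⟨w, hzw, w₀, hw⟩ := hS z hzS
  have hφw : Tendsto (φ ∘ w) atTop atTop :=
    tendsto_atTop_mono ((hzw.map φ).le_of_monotone Nat.mono_cast hz) tendsto_natCast_atTop_atTop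
  exact not_tendsto_nhds_of_tendsto_atTop hφw _ ((hφ.tendsto w₀).comp hw)

theorem exists_abs_le (hS : RelativelyConvexBlockCompact t S) (φ : E →ₗ[ℝ] ℝ)
    (hφ : Continuous[t, _] φ) : ∃ C, ∀ s ∈ S, |φ s| ≤ C := by
  obtain ⟨C₁, hC₁⟩ := hS.bddAbove_image φ hφ
  obtain ⟨C₂, hC₂⟩ := hS.bddAbove_image (-φ) (by simpa using hφ.neg)
  refine ⟨max C₁ C₂, fun s hs => abs_le.2 ⟨?_, ?_⟩⟩
  · have := hC₂ (mem_image_of_mem _ hs)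
    simp only [LinearMap.neg_apply] at this
    linarith [le_max_right C₁ C₂]
  · exact (hC₁ (mem_image_of_mem _ hs)).trans (le_max_left _ _)

end RelativelyConvexBlockCompact

theorem continuous_sigmaTop_apply {Z : Type*} [NormedAddCommGroup Z] [NormedSpace ℝ Z]
    {X : Submodule ℝ (Z →L[ℝ] ℝ)} {x : Z →L[ℝ] ℝ} (hx : x ∈ X) :
    Continuous[sigmaTop X, _] x := by
  have hpair : Continuous[sigmaTop X, _] fun z : Z => fun y : X => (y : Z →L[ℝ] ℝ) z :=
    continuous_induced_dom
  exact (@continuous_pi_iff _ _ _ (sigmaTop X) _ _).1 hpair ⟨x, hx⟩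

theorem exists_apply_le_of_forall_exists_abs_le {Z : Type*} [NormedAddCommGroup Z]
    [NormedSpace ℝ Z] {X : Submodule ℝ (Z →L[ℝ] ℝ)} (hXclosed : IsClosed (X : Set (Z →L[ℝ] ℝ)))
    {S : Set Z} (hS : ∀ x ∈ X, ∃ C, ∀ z ∈ S, |x z| ≤ C) :
    ∃ C, ∀ z ∈ S, ∀ x ∈ X, ‖x‖ ≤ 1 → x z ≤ C := by
  have : CompleteSpace X := hXclosed.completeSpace_coe
  let eval : S → X →L[ℝ] ℝ := fun z => (ContinuousLinearMap.apply ℝ ℝ (z : Z)).comp X.subtypeL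
  -- `↥X` carries the subspace topology of the strong topology on `Z →L[ℝ] ℝ`, which is not
  -- reducibly the norm topology, so the operator norm on `X →L[ℝ] ℝ` must be supplied by hand.
  let _ : Norm (X →L[ℝ] ℝ) := @ContinuousLinearMap.hasOpNorm ℝ ℝ X ℝ _ _ _ _ _ _ (RingHom.id ℝ)
  obtain ⟨C, hC⟩ := banach_steinhaus (𝕜 := ℝ) (𝕜₂ := ℝ) (σ₁₂ := RingHom.id ℝ) (g := eval)
    fun x : X => by
      obtain ⟨C, hC⟩ := hS x x.2
      exact ⟨C, fun z : S => hC z z.2⟩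
  refine ⟨max C 0, fun z hz x hx hx1 => ?_⟩
  have h : ‖eval ⟨z, hz⟩ ⟨x, hx⟩‖ ≤ max C 0 * ‖(⟨x, hx⟩ : X)‖ :=
    ContinuousLinearMap.le_of_opNorm_le (E := X) (F := ℝ) (𝕜 := ℝ) (𝕜₂ := ℝ)
      (σ₁₂ := RingHom.id ℝ) _ ((hC ⟨z, hz⟩).trans (le_max_left C 0)) _
  calc x z ≤ ‖eval ⟨z, hz⟩ ⟨x, hx⟩‖ := le_abs_self (x z)
    _ ≤ max C 0 * ‖x‖ := h
    _ ≤ max C 0 := mul_le_of_le_one_right (le_max_right C 0) hx1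

namespace IsNorming

variable {Z : Type*} [NormedAddCommGroup Z] [NormedSpace ℝ Z] {X : Submodule ℝ (Z →L[ℝ] ℝ)}

theorem exists_norm_le_of_forall_exists_abs_le (hX : IsNorming X)
    (hXclosed : IsClosed (X : Set (Z →L[ℝ] ℝ))) {S : Set Z}
    (hS : ∀ x ∈ X, ∃ C, ∀ z ∈ S, |x z| ≤ C) : ∃ M, ∀ z ∈ S, ‖z‖ ≤ M := by
  obtain ⟨c, hc, hnorm⟩ := hX
  obtain ⟨C, hC⟩ := exists_apply_le_of_forall_exists_abs_le hXclosed hS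
  refine ⟨C / c, fun z hz => (le_div_iff₀' hc).2 ((hnorm z).trans ?_)⟩
  refine csSup_le ⟨0, 0, X.zero_mem, by simp, by simp⟩ ?_
  rintro _ ⟨x, hx, hx1, rfl⟩
  exact hC z hz x hx hx1

end IsNorming

theorem normBounded_of_relativelyConvexBlockCompact_general
    {Z : Type*} [NormedAddCommGroup Z] [NormedSpace ℝ Z]
    (X : Submodule ℝ (Z →L[ℝ] ℝ)) (hXclosed : IsClosed (X : Set (Z →L[ℝ] ℝ)))
    (hXnorming : IsNorming X)
    (S : Set Z)
    (hS : ∀ z : ℕ → Z, (∀ n, z n ∈ S) →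
      ∃ w : ℕ → Z, ConvexBlock z w ∧
        ∃ w₀ : Z, Tendsto w atTop (@nhds _ (sigmaTop X) w₀)) :
    ∃ M : ℝ, ∀ z ∈ S, ‖z‖ ≤ M := by
  have hS : RelativelyConvexBlockCompact (sigmaTop X) S := hS
  exact hXnorming.exists_norm_le_of_forall_exists_abs_le hXclosed fun x hx =>
    hS.exists_abs_le (x : Z →ₗ[ℝ] ℝ) (continuous_sigmaTop_apply hx)

/-- A relatively convex block compact subset of `(Z, σ(Z,X))` is norm-bounded. -/
theorem normBounded_of_relativelyConvexBlockCompact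
    {Z : Type*} [NormedAddCommGroup Z] [NormedSpace ℝ Z] [CompleteSpace Z]
    (X : Submodule ℝ (Z →L[ℝ] ℝ)) (hXclosed : IsClosed (X : Set (Z →L[ℝ] ℝ)))
    (hXnorming : IsNorming X)
    (S : Set Z)
    (hS : ∀ z : ℕ → Z, (∀ n, z n ∈ S) →
      ∃ w : ℕ → Z, ConvexBlock z w ∧
        ∃ w₀ : Z, Tendsto w atTop (@nhds _ (sigmaTop X) w₀)) :
    ∃ M : ℝ, ∀ z ∈ S, ‖z‖ ≤ M :=
  normBounded_of_relativelyConvexBlockCompact_general X hXclosed hXnorming S hS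
end
end

section
/- Let Z be a non-reflexive real Banach space and let z** ∈ Z** \ Z (i.e. z** is not in the image of the canonical embedding of Z into Z**). Then the norm-closed subspace X = ker(z**) ⊆ Z* is norming for Z. -/
open MeasureTheory Filter Set Topology
open scoped UniformConvergence

noncomputable section

set_option maxHeartbeats 1000000 in
/-- For a non-reflexive Banach space `Z` and `z** ∈ Z** \ Z`, the norm-closed subspace
`ker(z**) ⊆ Z*` is norming for `Z`. -/
theorem ker_isNorming_of_not_mem_canonical_image
    {Z : Type*} [NormedAddCommGroup Z] [NormedSpace ℝ Z] [CompleteSpace Z]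
    (zss : (Z →L[ℝ] ℝ) →L[ℝ] ℝ)
    (hzss : ∀ z : Z, ∃ f : Z →L[ℝ] ℝ, zss f ≠ f z) :
    IsClosed ((LinearMap.ker (zss : (Z →L[ℝ] ℝ) →ₗ[ℝ] ℝ) : Submodule ℝ (Z →L[ℝ] ℝ)) : Set (Z →L[ℝ] ℝ)) ∧
    IsNorming (LinearMap.ker (zss : (Z →L[ℝ] ℝ) →ₗ[ℝ] ℝ)) := by
  have key :
      IsClosed ((LinearMap.ker (zss : (Z →L[ℝ] ℝ) →ₗ[ℝ] ℝ) : Submodule ℝ (Z →L[ℝ] ℝ)) : Set (Z →L[ℝ] ℝ)) ∧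
      (∃ c > (0 : ℝ), ∀ z : Z, c * ‖z‖ ≤
        sSup {r : ℝ | ∃ x ∈ LinearMap.ker (zss : (Z →L[ℝ] ℝ) →ₗ[ℝ] ℝ), ‖x‖ ≤ 1 ∧ r = x z}) := by
    refine ⟨ContinuousLinearMap.isClosed_ker zss, ?_⟩
    set J : Z →ₗᵢ[ℝ] ((Z →L[ℝ] ℝ) →L[ℝ] ℝ) := NormedSpace.inclusionInDoubleDualLi ℝ with hJdef
    have hJapp : ∀ (z : Z) (f : Z →L[ℝ] ℝ), J z f = f z := fun z f => rfl
    have hclosed : IsClosed (Set.range J) := J.isometry.isUniformInducing.isComplete_range.isClosed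
    have hnotmem : zss ∉ Set.range J := by
      rintro ⟨z, rfl⟩
      obtain ⟨f, hf⟩ := hzss z
      exact hf rfl
    have hd : 0 < Metric.infDist zss (Set.range J) :=
      (hclosed.notMem_iff_infDist_pos ⟨J 0, Set.mem_range_self 0⟩).1 hnotmem
    set d := Metric.infDist zss (Set.range J) with hddef
    have hzssne : zss ≠ 0 := by
      obtain ⟨f, hf⟩ := hzss 0
      intro h
      apply hf
      simp [h]
    obtain ⟨f₁, hf₁⟩ : ∃ f, zss f ≠ 0 := by
      by_contra h
      push_neg at h
      exact hzssne (ContinuousLinearMap.ext fun f => by simp [h f])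
    set f₀ : Z →L[ℝ] ℝ := (zss f₁)⁻¹ • f₁ with hf₀def
    have hf₀ : zss f₀ = 1 := by simp [hf₀def, inv_mul_cancel₀ hf₁]
    have hzn : (0 : ℝ) ≤ ‖zss‖ := by exact norm_nonneg zss
    have hsmul_le : ∀ (r : ℝ) (f : (Z →L[ℝ] ℝ) →L[ℝ] ℝ), ‖r • f‖ ≤ |r| * ‖f‖ := by
      intro r f
      exact ContinuousLinearMap.opNorm_smul_le r f
    have hsmul_eq : ∀ (r : ℝ) (f : (Z →L[ℝ] ℝ) →L[ℝ] ℝ), ‖r • f‖ = |r| * ‖f‖ := by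
      intro r f
      rcases eq_or_ne r 0 with rfl | hr
      · simp only [zero_smul, abs_zero, zero_mul]
        exact ContinuousLinearMap.opNorm_zero
      · refine le_antisymm (hsmul_le r f) ?_
        have h1 : ‖f‖ ≤ |r|⁻¹ * ‖r • f‖ := by
          have h2 := hsmul_le r⁻¹ (r • f)
          rw [smul_smul, inv_mul_cancel₀ hr, one_smul, abs_inv] at h2
          exact h2
        have habs : (0 : ℝ) < |r| := abs_pos.2 hr
        calc |r| * ‖f‖ ≤ |r| * (|r|⁻¹ * ‖r • f‖) :=
              mul_le_mul_of_nonneg_left h1 habs.le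
          _ = ‖r • f‖ := by field_simp
    refine ⟨d / (d + ‖zss‖), div_pos hd (by linarith), ?_⟩
    intro z
    set S := {r : ℝ | ∃ x ∈ LinearMap.ker (zss : (Z →L[ℝ] ℝ) →ₗ[ℝ] ℝ), ‖x‖ ≤ 1 ∧ r = x z} with hSdef
    have hS0 : (0 : ℝ) ∈ S := ⟨0, by simp, by simp, by simp⟩
    have hSbdd : BddAbove S := by
      refine ⟨‖z‖, ?_⟩
      rintro r ⟨x, _, hx1, rfl⟩
      calc x z ≤ ‖x z‖ := le_abs_self _
        _ ≤ ‖x‖ * ‖z‖ := x.le_opNorm z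
        _ ≤ 1 * ‖z‖ := by gcongr
        _ = ‖z‖ := one_mul _
    have hSsup0 : (0 : ℝ) ≤ sSup S := le_csSup hSbdd hS0
    set X : Submodule ℝ (Z →L[ℝ] ℝ) := LinearMap.ker (zss : (Z →L[ℝ] ℝ) →ₗ[ℝ] ℝ) with hXdef
    letI : NormedAddCommGroup X := inferInstance
    letI : NormedSpace ℝ X := inferInstance
    set T : X →L[ℝ] ℝ := (J z).comp X.subtypeL with hTdef
    have hTx : ∀ x : X, T x = (x : Z →L[ℝ] ℝ) z := fun x => rfl
    have hTnorm : ‖T‖ ≤ sSup S := by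
      refine ContinuousLinearMap.opNorm_le_bound _ hSsup0 ?_
      intro x
      have hcoe : ‖(x : Z →L[ℝ] ℝ)‖ = ‖x‖ := rfl
      rcases eq_or_ne (‖x‖) 0 with h0 | h0
      · have hx0 : (x : Z →L[ℝ] ℝ) = 0 := by
          have hx' : x = 0 := by exact norm_eq_zero.1 h0
          simp [hx']
        rw [hTx x, hx0, h0]
        simp [hSsup0]
      · have hxn : 0 < ‖x‖ := lt_of_le_of_ne (by exact norm_nonneg x) (Ne.symm h0)
        have hyX : ‖x‖⁻¹ • (x : Z →L[ℝ] ℝ) ∈ X := X.smul_mem _ x.2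
        have hyn : ‖‖x‖⁻¹ • (x : Z →L[ℝ] ℝ)‖ ≤ 1 := by
          have e : ‖‖x‖⁻¹ • (x : Z →L[ℝ] ℝ)‖ ≤ |‖x‖⁻¹| * ‖(x : Z →L[ℝ] ℝ)‖ := by
            exact ContinuousLinearMap.opNorm_smul_le _ _
          rw [hcoe, abs_of_pos (inv_pos.2 hxn)] at e
          rw [inv_mul_cancel₀ hxn.ne'] at e
          exact e
        have h1 : ‖x‖⁻¹ * (x : Z →L[ℝ] ℝ) z ≤ sSup S :=
          le_csSup hSbdd ⟨‖x‖⁻¹ • (x : Z →L[ℝ] ℝ), hyX, hyn, by simp⟩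
        have h2 : -(‖x‖⁻¹ * (x : Z →L[ℝ] ℝ) z) ≤ sSup S := by
          refine le_csSup hSbdd ⟨-(‖x‖⁻¹ • (x : Z →L[ℝ] ℝ)), X.neg_mem hyX, ?_, by simp⟩
          exact le_trans (le_of_eq (by exact norm_neg (‖x‖⁻¹ • (x : Z →L[ℝ] ℝ)))) hyn
        have habs : ‖x‖⁻¹ * |(x : Z →L[ℝ] ℝ) z| ≤ sSup S := by
          rcases le_or_gt 0 ((x : Z →L[ℝ] ℝ) z) with hc | hc
          · rwa [abs_of_nonneg hc]
          · rw [abs_of_neg hc, mul_neg]; linarith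
        have hnval : ‖T x‖ = |(x : Z →L[ℝ] ℝ) z| := by
          rw [hTx x]; exact Real.norm_eq_abs _
        rw [hnval]
        calc |(x : Z →L[ℝ] ℝ) z| = ‖x‖ * (‖x‖⁻¹ * |(x : Z →L[ℝ] ℝ) z|) :=
              (mul_inv_cancel_left₀ hxn.ne' _).symm
          _ ≤ ‖x‖ * sSup S := mul_le_mul_of_nonneg_left habs hxn.le
          _ = sSup S * ‖x‖ := mul_comm _ _
    obtain ⟨u, hu, hunorm⟩ := exists_extension_norm_eq X T
    set lam : ℝ := (J z - u) f₀ with hlamdef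
    have hvanish : ∀ x : Z →L[ℝ] ℝ, x ∈ X → (J z - u) x = 0 := by
      intro x hx
      have h1 : u x = T ⟨x, hx⟩ := hu ⟨x, hx⟩
      rw [ContinuousLinearMap.sub_apply, h1, hTx, hJapp, sub_self]
    have hkey : J z - lam • zss = u := by
      have hg : ∀ g : Z →L[ℝ] ℝ, (J z - u) g = lam * zss g := by
        intro g
        have hmem : g - zss g • f₀ ∈ X := by
          have hz0 : zss (g - zss g • f₀) = 0 := by
            simp [map_sub, _root_.map_smul, hf₀]
          exact hz0
        have h0 : (J z - u) (g - zss g • f₀) = 0 := hvanish _ hmem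
        have h1 : (J z - u) g - zss g * (J z - u) f₀ = 0 := by
          rw [← h0]
          simp only [map_sub, _root_.map_smul, ContinuousLinearMap.sub_apply, smul_eq_mul]
          try ring
        rw [hlamdef]; linarith
      ext g
      have hgg := hg g
      simp only [ContinuousLinearMap.sub_apply, ContinuousLinearMap.smul_apply,
        smul_eq_mul] at hgg ⊢
      linarith
    have e6 : ‖J z - lam • zss‖ = ‖T‖ := by rw [hkey]; exact hunorm
    have hb1 : ‖z‖ ≤ ‖T‖ + |lam| * ‖zss‖ := by
      have step1 : ‖z‖ = ‖J z‖ := by exact (J.norm_map z).symm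
      have step2 : ‖J z‖ = ‖(J z - lam • zss) + lam • zss‖ := by congr 1; abel
      have step3 : ‖(J z - lam • zss) + lam • zss‖ ≤ ‖J z - lam • zss‖ + ‖lam • zss‖ := by
        exact norm_add_le (J z - lam • zss) (lam • zss)
      have step4 : ‖lam • zss‖ = |lam| * ‖zss‖ := hsmul_eq _ _
      rw [step1, step2]
      rw [e6, step4] at step3
      exact step3
    have hb2 : |lam| * d ≤ ‖T‖ := by
      rcases eq_or_ne lam 0 with h0 | h0
      · rw [h0]
        simpa using (by exact norm_nonneg T : (0 : ℝ) ≤ ‖T‖)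
      · have hdle : d ≤ dist zss (J (lam⁻¹ • z)) :=
          Metric.infDist_le_dist_of_mem ⟨lam⁻¹ • z, rfl⟩
        have heq : ‖T‖ = |lam| * dist zss (J (lam⁻¹ • z)) := by
          have e1 : dist zss (J (lam⁻¹ • z)) = ‖zss - J (lam⁻¹ • z)‖ := by
            exact dist_eq_norm zss (J (lam⁻¹ • z))
          have e2 : J (lam⁻¹ • z) = lam⁻¹ • J z := by exact J.map_smul lam⁻¹ z
          have e3 : lam • (zss - lam⁻¹ • J z) = lam • zss - J z := by
            rw [smul_sub lam zss (lam⁻¹ • J z), smul_smul, mul_inv_cancel₀ h0, one_smul]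
          have e4 : ‖lam • (zss - lam⁻¹ • J z)‖ = |lam| * ‖zss - lam⁻¹ • J z‖ :=
            hsmul_eq _ _
          have e5 : ‖lam • zss - J z‖ = ‖J z - lam • zss‖ := by exact norm_sub_rev (lam • zss) (J z)
          rw [e1, e2, ← e6, ← e5, ← e3, e4]
        rw [heq]
        exact mul_le_mul_of_nonneg_left hdle (abs_nonneg lam)
    have hfinal : d / (d + ‖zss‖) * ‖z‖ ≤ ‖T‖ := by
      rw [div_mul_eq_mul_div, div_le_iff₀ (by linarith)]
      have k1 : d * ‖z‖ ≤ d * (‖T‖ + |lam| * ‖zss‖) := mul_le_mul_of_nonneg_left hb1 hd.le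
      have k2 : (|lam| * d) * ‖zss‖ ≤ ‖T‖ * ‖zss‖ := mul_le_mul_of_nonneg_right hb2 hzn
      calc d * ‖z‖ ≤ d * (‖T‖ + |lam| * ‖zss‖) := k1
        _ = d * ‖T‖ + (|lam| * d) * ‖zss‖ := by ring
        _ ≤ d * ‖T‖ + ‖T‖ * ‖zss‖ := by linarith
        _ = ‖T‖ * (d + ‖zss‖) := by ring
    linarith
  exact ⟨key.1, key.2⟩
end
end

section
/- Let Z be a real Banach space and X ⊆ Z* a norm-closed subspace which is norming for Z. Suppose that the closed unit ball B_{X*} of X* equipped with the weak* topology is convex block compact. Then every absolutely convex σ(Z,X)-compact set K ⊆ Z is relatively convex block compact in (Z,σ(Z,X)): every sequence in K admits a convex block subsequence that σ(Z,X)-converges to a point of K. -/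
open MeasureTheory Filter Set Topology
open scoped UniformConvergence

noncomputable section

section WeakStar

variable {E : Type*} [NormedAddCommGroup E] [NormedSpace ℝ E]

theorem tendsto_wstarTop_iff {ι : Type*} {l : Filter ι} {h : ι → E →L[ℝ] ℝ} {f : E →L[ℝ] ℝ} :
    Tendsto h l (@nhds _ (wstarTop E) f) ↔ ∀ x, Tendsto (fun i => h i x) l (𝓝 (f x)) := by
  rw [wstarTop, nhds_induced, tendsto_comap_iff, tendsto_pi_nhds]
  rfl

theorem t2Space_wstarTop : @T2Space (E →L[ℝ] ℝ) (wstarTop E) :=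
  @T2Space.of_injective_continuous _ _ (wstarTop E) _ _ _ DFunLike.coe_injective
    continuous_induced_dom

/-- Weak* compact sets are pointwise bounded, hence norm bounded by Banach–Steinhaus. -/
theorem exists_pos_norm_le_of_isCompact_wstarTop [CompleteSpace E] {S : Set (E →L[ℝ] ℝ)}
    (hS : @IsCompact _ (wstarTop E) S) : ∃ C > 0, ∀ f ∈ S, ‖f‖ ≤ C := by
  let := wstarTop E
  have hbdd (x : E) : ∃ C, ∀ f : S, ‖(f : E →L[ℝ] ℝ) x‖ ≤ C := by
    have hev : Continuous fun f : E →L[ℝ] ℝ => f x :=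
      (continuous_apply x).comp continuous_induced_dom
    obtain ⟨C, hC⟩ := (hS.image hev).isBounded.exists_norm_le
    exact ⟨C, fun f => hC _ ⟨f, f.2, rfl⟩⟩
  obtain ⟨C, hC⟩ := banach_steinhaus hbdd
  exact ⟨max C 1, by positivity, fun f hf => (hC ⟨f, hf⟩).trans (le_max_left C 1)⟩

end WeakStar

section ConvexBlock

variable {E F : Type*} [AddCommGroup E] [Module ℝ E] [AddCommMonoid F] [Module ℝ F]

theorem ConvexBlock.mem_of_convex {g h : ℕ → E} (hgh : ConvexBlock g h) {K : Set E}
    (hK : Convex ℝ K) (hg : ∀ n, g n ∈ K) (k : ℕ) : h k ∈ K := by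
  obtain ⟨I, a, -, ha, hsum, hh⟩ := hgh
  exact hh k ▸ hK.sum_mem (fun n _ => ha n) (hsum k) fun n _ => hg n

theorem ConvexBlock.exists_lift (L : E →ₗ[ℝ] F) {z : ℕ → E} {h : ℕ → F}
    (hh : ConvexBlock (fun n => L (z n)) h) : ∃ w, ConvexBlock z w ∧ ∀ k, L (w k) = h k := by
  obtain ⟨I, a, hI, ha, hsum, hh⟩ := hh
  exact ⟨fun k => ∑ n ∈ I k, a n • z n, ⟨I, a, hI, ha, hsum, fun _ => rfl⟩,
    fun k => by simp [hh k, map_sum, map_smul]⟩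

end ConvexBlock

/-- Normalise `J (z n)` into the unit ball, extract a `w*`-convergent convex block subsequence,
and pull it back along `J`; its limit lies in `J(K)` because `J(K)` is `w*`-closed. -/
theorem exists_convexBlock_tendsto_of_isCompact_induced {Z E : Type*} [AddCommGroup Z]
    [Module ℝ Z] [NormedAddCommGroup E] [NormedSpace ℝ E] [CompleteSpace E]
    (hCBC : DualBallConvexBlockCompact E) (J : Z →ₗ[ℝ] E →L[ℝ] ℝ) {K : Set Z}
    (hKconv : Convex ℝ K) (hKcomp : @IsCompact Z ((wstarTop E).induced J) K) {z : ℕ → Z}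
    (hz : ∀ n, z n ∈ K) :
    ∃ w : ℕ → Z, ConvexBlock z w ∧
      ∃ w₀ ∈ K, Tendsto w atTop (@nhds _ ((wstarTop E).induced J) w₀) := by
  let := wstarTop E
  let : TopologicalSpace Z := (wstarTop E).induced J
  have := t2Space_wstarTop (E := E)
  have hJK : IsCompact (J '' K) := hKcomp.image continuous_induced_dom
  obtain ⟨M, hM, hMK⟩ := exists_pos_norm_le_of_isCompact_wstarTop hJK
  obtain ⟨h, hh, f, hf⟩ := hCBC (fun n => M⁻¹ • J (z n)) fun n => by
    rw [norm_smul, Real.norm_of_nonneg (inv_nonneg.2 hM.le)]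
    exact inv_mul_le_one_of_le₀ (hMK _ ⟨z n, hz n, rfl⟩) hM.le
  obtain ⟨w, hw, hJw⟩ := hh.exists_lift (M⁻¹ • J)
  have hJw_eq (k : ℕ) : J (w k) = M • h k := by
    rw [← hJw k, LinearMap.smul_apply, smul_inv_smul₀ hM.ne']
  have hlim : Tendsto (fun k => J (w k)) atTop (𝓝 (M • f)) := by
    simp_rw [hJw_eq, tendsto_wstarTop_iff]
    exact fun x => (tendsto_wstarTop_iff.1 hf x).const_mul M
  obtain ⟨w₀, hw₀K, hw₀⟩ : M • f ∈ J '' K :=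
    hJK.isClosed.mem_of_tendsto hlim
      (Eventually.of_forall fun k => ⟨w k, hw.mem_of_convex hKconv hz k, rfl⟩)
  refine ⟨w, hw, w₀, hw₀K, ?_⟩
  rw [nhds_induced, tendsto_comap_iff, hw₀]
  exact hlim

theorem sigmaTop_eq_induced {Z : Type*} [NormedAddCommGroup Z] [NormedSpace ℝ Z]
    (X : Submodule ℝ (Z →L[ℝ] ℝ)) :
    sigmaTop X = (wstarTop X).induced X.subtypeL.flip := by
  rw [wstarTop, induced_compose]
  rfl

theorem absConvex_compact_relativelyConvexBlockCompact_general
    {Z : Type*} [NormedAddCommGroup Z] [NormedSpace ℝ Z]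
    (X : Submodule ℝ (Z →L[ℝ] ℝ)) (hXclosed : IsClosed (X : Set (Z →L[ℝ] ℝ)))
    (hCBC : DualBallConvexBlockCompact ↥X)
    (K : Set Z) (hKconv : Convex ℝ K)
    (hKcomp : @IsCompact Z (sigmaTop X) K) :
    ∀ z : ℕ → Z, (∀ n, z n ∈ K) →
      ∃ w : ℕ → Z, ConvexBlock z w ∧
        ∃ w₀ ∈ K, Tendsto w atTop (@nhds _ (sigmaTop X) w₀) := by
  intro z hz
  have : CompleteSpace X := hXclosed.completeSpace_coe
  rw [sigmaTop_eq_induced] at hKcomp ⊢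
  exact exists_convexBlock_tendsto_of_isCompact_induced hCBC _ hKconv hKcomp hz

/-- If `(B_{X*}, w*)` is convex block compact, then every absolutely convex
`σ(Z,X)`-compact set `K ⊆ Z` is relatively convex block compact in `(Z, σ(Z,X))`:
every sequence in `K` admits a convex block subsequence `σ(Z,X)`-converging to a
point of `K`. -/
theorem absConvex_compact_relativelyConvexBlockCompact
    {Z : Type*} [NormedAddCommGroup Z] [NormedSpace ℝ Z] [CompleteSpace Z]
    (X : Submodule ℝ (Z →L[ℝ] ℝ)) (hXclosed : IsClosed (X : Set (Z →L[ℝ] ℝ)))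
    (hXnorming : IsNorming X)
    (hCBC : DualBallConvexBlockCompact ↥X)
    (K : Set Z) (hKconv : Convex ℝ K) (hKbal : Balanced ℝ K)
    (hKcomp : @IsCompact Z (sigmaTop X) K) :
    ∀ z : ℕ → Z, (∀ n, z n ∈ K) →
      ∃ w : ℕ → Z, ConvexBlock z w ∧
        ∃ w₀ ∈ K, Tendsto w atTop (@nhds _ (sigmaTop X) w₀) :=
  absConvex_compact_relativelyConvexBlockCompact_general X hXclosed hCBC K hKconv hKcomp
end
end
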